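/- arXiv:1805.03736 — 3 statements merged into one kernel-verified Lean document; each statement's English description precedes it below -/
import Mathlib

section
/- The set of points with degree at least the degeneracy has measure at least the degeneracy: |{x ∈ [0,1] : d_w(x) ≥ δ(w)}| ≥ |K_{δ(w)}(w)| ≥ δ(w). -/
open MeasureTheory Set Filter Topology

/-- A graphon: symmetric measurable `w : [0,1]² → [0,1]` (stated on all of ℝ²). -/
def Graphon (w : ℝ → ℝ → ℝ) : Prop :=
  Measurable (Function.uncurry w) ∧ (∀ x y, w x y = w y x) ∧
    ∀ x y, w x y ∈ Set.Icc (0 : ℝ) 1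

/-- Degree of `x` restricted to `K`: `d_w^K(x) = ∫_K w(x,y) dy`. -/
noncomputable def degK (w : ℝ → ℝ → ℝ) (K : Set ℝ) (x : ℝ) : ℝ := ∫ y in K, w x y

/-- Iterated peeling sets: `coreIter w κ n = K^{n+1}_κ(w)` (so index 0 is `K¹`). -/
noncomputable def coreIter (w : ℝ → ℝ → ℝ) (κ : ℝ) : ℕ → Set ℝ
  | 0 => {x ∈ Set.Icc (0 : ℝ) 1 | κ ≤ degK w (Set.Icc 0 1) x}
  | n + 1 => {x ∈ coreIter w κ n | κ ≤ degK w (coreIter w κ n) x}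

/-- The κ-core `K_κ(w) = ⋂ₙ K^n_κ(w)`. -/
noncomputable def core (w : ℝ → ℝ → ℝ) (κ : ℝ) : Set ℝ := ⋂ n, coreIter w κ n

/-- Shell index `δ_x(w) = sup {κ : x ∈ K_κ(w)}`. -/
noncomputable def shell (w : ℝ → ℝ → ℝ) (x : ℝ) : ℝ := sSup {κ | x ∈ core w κ}

/-- Degeneracy `δ(w) = sup {κ : |K_κ(w)| > 0}`. -/
noncomputable def degen (w : ℝ → ℝ → ℝ) : ℝ := sSup {κ | 0 < volume (core w κ)}

/-- Cut-norm distance `d_□`. -/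
noncomputable def cutDist (w w' : ℝ → ℝ → ℝ) : ℝ :=
  sSup {r | ∃ S T : Set ℝ, MeasurableSet S ∧ MeasurableSet T ∧
    S ⊆ Set.Icc 0 1 ∧ T ⊆ Set.Icc 0 1 ∧
    r = |∫ x in S, ∫ y in T, (w x y - w' x y)|}

/-- A measure-preserving map of `[0,1]`. -/
def MPMap (σ : ℝ → ℝ) : Prop :=
  Measurable σ ∧ Set.MapsTo σ (Set.Icc 0 1) (Set.Icc 0 1) ∧
    ∀ A : Set ℝ, MeasurableSet A → A ⊆ Set.Icc 0 1 →
      volume (σ ⁻¹' A ∩ Set.Icc 0 1) = volume A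

/-- Cut metric `δ_□(w,w') = inf_σ d_□(w^σ, w')`. -/
noncomputable def cutMetric (w w' : ℝ → ℝ → ℝ) : ℝ :=
  sInf {r | ∃ σ : ℝ → ℝ, MPMap σ ∧ r = cutDist (fun x y => w (σ x) (σ y)) w'}

variable {w : ℝ → ℝ → ℝ}

lemma meas_left (hw : Graphon w) (x : ℝ) : Measurable (w x) :=
  hw.1.comp measurable_prodMk_left

lemma integrableOn_w (hw : Graphon w) (x : ℝ) {K : Set ℝ} (hK : K ⊆ Set.Icc 0 1) :
    IntegrableOn (w x) K := by
  have : IntegrableOn (w x) (Set.Icc (0:ℝ) 1) := by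
    refine Integrable.mono' (integrable_const 1) (meas_left hw x).aestronglyMeasurable ?_
    filter_upwards with y
    rw [Real.norm_eq_abs, abs_le]
    exact ⟨by linarith [(hw.2.2 x y).1], (hw.2.2 x y).2⟩
  exact this.mono_set hK

lemma degK_nonneg (hw : Graphon w) (x : ℝ) (K : Set ℝ) : 0 ≤ degK w K x :=
  setIntegral_nonneg_of_ae (by
    filter_upwards with y using (hw.2.2 x y).1)

lemma degK_mono (hw : Graphon w) (x : ℝ) {K K' : Set ℝ} (hK' : K' ⊆ Set.Icc 0 1)
    (h : K ⊆ K') : degK w K x ≤ degK w K' x := by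
  refine setIntegral_mono_set (integrableOn_w hw x hK') ?_ (HasSubset.Subset.eventuallyLE h)
  filter_upwards with y using (hw.2.2 x y).1

lemma degK_le_vol (hw : Graphon w) (x : ℝ) {K : Set ℝ} (hK : K ⊆ Set.Icc 0 1)
    (hKm : MeasurableSet K) : degK w K x ≤ (volume K).toReal := by
  have hfin : volume K ≠ ⊤ :=
    ((measure_mono hK).trans_lt (by simp [Real.volume_Icc])).ne
  calc degK w K x ≤ ∫ _ in K, (1:ℝ) :=
        setIntegral_mono_on (integrableOn_w hw x hK) (integrableOn_const hfin)
          hKm (fun y _ => (hw.2.2 x y).2)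
    _ = (volume K).toReal := by simp; rfl

lemma measurable_degK (hw : Graphon w) {K : Set ℝ} (hK : MeasurableSet K) :
    Measurable (fun x => degK w K x) := by
  have : StronglyMeasurable (fun x => ∫ y, w x y ∂(volume.restrict K)) :=
    (hw.1.stronglyMeasurable).integral_prod_right
  exact this.measurable

lemma coreIter_subset_Icc (κ : ℝ) : ∀ n, coreIter w κ n ⊆ Set.Icc 0 1
  | 0 => fun x hx => hx.1
  | n + 1 => fun x hx => coreIter_subset_Icc κ n hx.1

lemma measurableSet_coreIter (hw : Graphon w) (κ : ℝ) :
    ∀ n, MeasurableSet (coreIter w κ n)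
  | 0 => measurableSet_Icc.inter (measurableSet_le measurable_const
      (measurable_degK hw measurableSet_Icc))
  | n + 1 => (measurableSet_coreIter hw κ n).inter (measurableSet_le measurable_const
      (measurable_degK hw (measurableSet_coreIter hw κ n)))

lemma coreIter_succ_subset (κ : ℝ) (n : ℕ) : coreIter w κ (n+1) ⊆ coreIter w κ n :=
  fun _ hx => hx.1

lemma coreIter_antitone (κ : ℝ) : Antitone (coreIter w κ) :=
  antitone_nat_of_succ_le (coreIter_succ_subset κ)

lemma coreIter_anti_kappa (hw : Graphon w) {κ κ' : ℝ} (h : κ ≤ κ') :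
    ∀ n, coreIter w κ' n ⊆ coreIter w κ n
  | 0 => fun x hx => ⟨hx.1, h.trans hx.2⟩
  | n + 1 => fun x hx =>
    ⟨coreIter_anti_kappa hw h n hx.1,
      h.trans (hx.2.trans (degK_mono hw x (coreIter_subset_Icc κ n)
        (coreIter_anti_kappa hw h n)))⟩

lemma core_subset_Icc (κ : ℝ) : core w κ ⊆ Set.Icc 0 1 :=
  (iInter_subset _ 0).trans (coreIter_subset_Icc κ 0)

lemma measurableSet_core (hw : Graphon w) (κ : ℝ) : MeasurableSet (core w κ) :=
  MeasurableSet.iInter (measurableSet_coreIter hw κ)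

lemma core_anti (hw : Graphon w) {κ κ' : ℝ} (h : κ ≤ κ') : core w κ' ⊆ core w κ :=
  iInter_mono fun n => coreIter_anti_kappa hw h n

lemma tendsto_degK_iInter (hw : Graphon w) (x : ℝ) {A : ℕ → Set ℝ}
    (hA : ∀ n, MeasurableSet (A n)) (hsub : A 0 ⊆ Set.Icc 0 1) (hanti : Antitone A) :
    Tendsto (fun n => degK w (A n) x) atTop (𝓝 (degK w (⋂ n, A n) x)) :=
  tendsto_setIntegral_of_antitone hA hanti ⟨0, integrableOn_w hw x hsub⟩

lemma core_mem_le (hw : Graphon w) {κ : ℝ} {x : ℝ} (hx : x ∈ core w κ) :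
    κ ≤ degK w (core w κ) x := by
  have h1 : ∀ n, κ ≤ degK w (coreIter w κ n) x := fun n =>
    (mem_iInter.1 hx (n+1)).2
  have h2 := tendsto_degK_iInter hw x (measurableSet_coreIter hw κ)
    (coreIter_subset_Icc κ 0) (coreIter_antitone κ)
  exact ge_of_tendsto' h2 h1

lemma tendsto_sub_inv (a : ℝ) :
    Tendsto (fun m : ℕ => a - ((m:ℝ)+1)⁻¹) atTop (𝓝 a) := by
  have h : Tendsto (fun m : ℕ => ((m:ℝ)+1)⁻¹) atTop (𝓝 0) := by
    simpa [one_div] using tendsto_one_div_add_atTop_nhds_zero_nat (𝕜 := ℝ)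
  simpa using tendsto_const_nhds.sub h

lemma le_of_seq {a b : ℝ} (h : ∀ m : ℕ, a - ((m:ℝ)+1)⁻¹ ≤ b) : a ≤ b :=
  le_of_tendsto (tendsto_sub_inv a) (Eventually.of_forall h)

lemma seq_mono (a : ℝ) : Monotone (fun m : ℕ => a - ((m:ℝ)+1)⁻¹) := by
  intro m m' h
  have : ((m':ℝ)+1)⁻¹ ≤ ((m:ℝ)+1)⁻¹ := by
    apply inv_anti₀ (by positivity)
    have : (m:ℝ) ≤ m' := Nat.cast_le.2 h
    linarith
  simp only []
  linarith

lemma seq_lt (a : ℝ) (m : ℕ) : a - ((m:ℝ)+1)⁻¹ < a := by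
  have : (0:ℝ) < ((m:ℝ)+1)⁻¹ := by positivity
  linarith

lemma coreIter_eq_iInter (hw : Graphon w) (δ : ℝ) :
    ∀ n, coreIter w δ n = ⋂ m : ℕ, coreIter w (δ - ((m:ℝ)+1)⁻¹) n := by
  intro n
  induction n with
  | zero =>
    ext x
    simp only [coreIter, mem_setOf_eq, mem_iInter]
    constructor
    · exact fun hx m => ⟨hx.1, (seq_lt δ m).le.trans hx.2⟩
    · exact fun hx => ⟨(hx 0).1, le_of_seq fun m => (hx m).2⟩
  | succ n ih =>
    ext x
    simp only [coreIter, mem_setOf_eq, mem_iInter]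
    constructor
    · intro hx m
      refine ⟨coreIter_anti_kappa hw (seq_lt δ m).le n hx.1, ?_⟩
      exact (seq_lt δ m).le.trans (hx.2.trans (degK_mono hw x
        (coreIter_subset_Icc _ n) (coreIter_anti_kappa hw (seq_lt δ m).le n)))
    · intro hx
      have hx1 : x ∈ coreIter w δ n := by
        rw [ih, mem_iInter]; exact fun m => (hx m).1
      refine ⟨hx1, ?_⟩
      have hanti : Antitone (fun m : ℕ => coreIter w (δ - ((m:ℝ)+1)⁻¹) n) :=
        fun m m' h => coreIter_anti_kappa hw (seq_mono δ h) n
      have hlim := tendsto_degK_iInter hw x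
        (fun m => measurableSet_coreIter hw _ n)
        (coreIter_subset_Icc _ n) hanti
      rw [← ih] at hlim
      exact le_of_tendsto_of_tendsto' (tendsto_sub_inv δ) hlim fun m => (hx m).2

lemma core_eq_iInter (hw : Graphon w) (δ : ℝ) :
    core w δ = ⋂ m : ℕ, core w (δ - ((m:ℝ)+1)⁻¹) := by
  simp only [core]
  rw [iInter_comm]
  exact iInter_congr (coreIter_eq_iInter hw δ)

lemma core_zero (hw : Graphon w) : core w 0 = Set.Icc 0 1 := by
  have h : ∀ n, coreIter w 0 n = Set.Icc (0:ℝ) 1 := by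
    intro n
    induction n with
    | zero =>
      ext x
      simp only [coreIter, mem_setOf_eq]
      exact ⟨fun h => h.1, fun h => ⟨h, degK_nonneg hw x _⟩⟩
    | succ n ih =>
      ext x
      simp only [coreIter, mem_setOf_eq, ih]
      exact ⟨fun h => h.1, fun h => ⟨h, degK_nonneg hw x _⟩⟩
  simp only [core, h, iInter_const]

lemma degen_set_nonempty (hw : Graphon w) : (0:ℝ) ∈ {κ | 0 < volume (core w κ)} := by
  simp only [mem_setOf_eq, core_zero hw, Real.volume_Icc]
  norm_num

lemma degen_set_bddAbove (hw : Graphon w) : BddAbove {κ | 0 < volume (core w κ)} := by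
  refine ⟨1, fun κ hκ => ?_⟩
  obtain ⟨x, hx⟩ := nonempty_of_measure_ne_zero hκ.ne'
  have hx0 : x ∈ coreIter w κ 0 := mem_iInter.1 hx 0
  have : κ ≤ degK w (Set.Icc 0 1) x := hx0.2
  have h2 := degK_le_vol hw x (le_refl (Set.Icc (0:ℝ) 1)) measurableSet_Icc
  rw [Real.volume_Icc] at h2
  simpa using this.trans h2

lemma vol_core_pos (hw : Graphon w) {κ : ℝ} (h : κ < degen w) :
    0 < volume (core w κ) := by
  obtain ⟨κ', hκ', hlt⟩ := exists_lt_of_lt_csSup ⟨0, degen_set_nonempty hw⟩ h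
  exact hκ'.trans_le (measure_mono (core_anti hw hlt.le))

lemma vol_core_ne_top (hw : Graphon w) (κ : ℝ) : volume (core w κ) ≠ ⊤ :=
  ((measure_mono (core_subset_Icc κ)).trans_lt (by simp [Real.volume_Icc])).ne

theorem stmt9 (w : ℝ → ℝ → ℝ) (hw : Graphon w) :
    ENNReal.ofReal (degen w) ≤ volume (core w (degen w)) ∧
    volume (core w (degen w)) ≤
      volume {x ∈ Set.Icc (0 : ℝ) 1 | degen w ≤ degK w (Set.Icc 0 1) x} := by
  constructor
  · set δ := degen w with hδ
    set c : ℕ → ℝ := fun m => δ - ((m:ℝ)+1)⁻¹ with hc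
    have key : ∀ m, ENNReal.ofReal (c m) ≤ volume (core w (c m)) := by
      intro m
      have hpos := vol_core_pos hw (seq_lt δ m)
      obtain ⟨x, hx⟩ := nonempty_of_measure_ne_zero hpos.ne'
      have h1 : c m ≤ degK w (core w (c m)) x := core_mem_le hw hx
      have h2 : degK w (core w (c m)) x ≤ (volume (core w (c m))).toReal :=
        degK_le_vol hw x (core_subset_Icc _) (measurableSet_core hw _)
      exact ENNReal.ofReal_le_of_le_toReal (h1.trans h2)
    have hvol : Tendsto (fun m => volume (core w (c m))) atTop
        (𝓝 (volume (⋂ m, core w (c m)))) := by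
      refine tendsto_measure_iInter_atTop
        (fun m => (measurableSet_core hw _).nullMeasurableSet)
        (fun m m' h => core_anti hw (seq_mono δ h)) ⟨0, vol_core_ne_top hw _⟩
    rw [← core_eq_iInter hw δ] at hvol
    have hcl : Tendsto (fun m => ENNReal.ofReal (c m)) atTop (𝓝 (ENNReal.ofReal δ)) :=
      (ENNReal.continuous_ofReal.tendsto δ).comp (tendsto_sub_inv δ)
    exact le_of_tendsto_of_tendsto' hcl hvol key
  · have hsub : core w (degen w) ⊆
        {x ∈ Set.Icc (0 : ℝ) 1 | degen w ≤ degK w (Set.Icc 0 1) x} :=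
      (iInter_subset _ 0).trans (by rw [coreIter])
    exact measure_mono hsub
end

section
/- For a measure-preserving map σ : [0,1] → [0,1] and a graphon w, the iterated core sets of the pulled-back graphon w^σ(x,y) = w(σ(x),σ(y)) satisfy K^n_κ(w^σ) = σ^{-1}(K^n_κ(w)) for all n and κ. -/
open MeasureTheory Set Filter

lemma map_restrict {σ : ℝ → ℝ} (hσ : MPMap σ) :
    Measure.map σ (volume.restrict (Set.Icc 0 1)) = volume.restrict (Set.Icc (0:ℝ) 1) := by
  ext s hs
  rw [Measure.map_apply hσ.1 hs, Measure.restrict_apply (hσ.1 hs),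
    Measure.restrict_apply hs]
  have h1 : σ ⁻¹' s ∩ Set.Icc 0 1 = σ ⁻¹' (s ∩ Set.Icc 0 1) ∩ Set.Icc 0 1 := by
    ext x
    simp only [Set.mem_inter_iff, Set.mem_preimage]
    exact ⟨fun ⟨h, hx⟩ => ⟨⟨h, hσ.2.1 hx⟩, hx⟩, fun ⟨⟨h, _⟩, hx⟩ => ⟨h, hx⟩⟩
  rw [h1, hσ.2.2 _ (hs.inter measurableSet_Icc) Set.inter_subset_right]

lemma degK_comp {w : ℝ → ℝ → ℝ} (hw : Graphon w) {σ : ℝ → ℝ} (hσ : MPMap σ)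
    {K : Set ℝ} (hK : MeasurableSet K) (hKsub : K ⊆ Set.Icc 0 1) (x : ℝ) :
    degK (fun x y => w (σ x) (σ y)) (σ ⁻¹' K ∩ Set.Icc 0 1) x = degK w K (σ x) := by
  have hsec : Measurable fun y => w (σ x) y :=
    hw.1.comp (measurable_prodMk_left)
  have h1 : degK w K (σ x) = ∫ y, Set.indicator K (fun y => w (σ x) y) y
      ∂(volume.restrict (Set.Icc 0 1)) := by
    rw [integral_indicator hK, Measure.restrict_restrict hK,
      Set.inter_eq_left.mpr hKsub]
    rfl
  rw [h1, ← map_restrict hσ,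
    integral_map hσ.1.aemeasurable
      ((hsec.indicator hK).aestronglyMeasurable)]
  have h2 : (fun y => Set.indicator K (fun y => w (σ x) y) (σ y))
      = Set.indicator (σ ⁻¹' K) (fun y => w (σ x) (σ y)) := by
    ext y
    by_cases h : σ y ∈ K <;> simp [Set.indicator, h]
  rw [h2, integral_indicator (hσ.1 hK), Measure.restrict_restrict (hσ.1 hK)]
  rfl

lemma coreIter_subset (w : ℝ → ℝ → ℝ) (κ : ℝ) (n : ℕ) :
    coreIter w κ n ⊆ Set.Icc 0 1 := by
  induction n with
  | zero => exact Set.sep_subset _ _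
  | succ n ih => exact (Set.sep_subset _ _).trans ih

lemma coreIter_measurable {w : ℝ → ℝ → ℝ} (hw : Graphon w) (κ : ℝ) (n : ℕ) :
    MeasurableSet (coreIter w κ n) := by
  have hdeg : ∀ K : Set ℝ, Measurable (degK w K) := by
    intro K
    have : StronglyMeasurable (Function.uncurry w) := hw.1.stronglyMeasurable
    exact (this.integral_prod_right' (ν := volume.restrict K)).measurable
  induction n with
  | zero =>
    exact measurableSet_Icc.inter (measurableSet_le measurable_const (hdeg _))
  | succ n ih =>
    exact ih.inter (measurableSet_le measurable_const (hdeg _))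

theorem stmt12 (w : ℝ → ℝ → ℝ) (hw : Graphon w) (σ : ℝ → ℝ) (hσ : MPMap σ)
    (κ : ℝ) (n : ℕ) :
    coreIter (fun x y => w (σ x) (σ y)) κ n = σ ⁻¹' (coreIter w κ n) ∩ Set.Icc 0 1 := by
  induction n with
  | zero =>
    have hI : σ ⁻¹' (Set.Icc (0:ℝ) 1) ∩ Set.Icc 0 1 = Set.Icc 0 1 := by
      apply Set.inter_eq_right.mpr
      exact fun x hx => hσ.2.1 hx
    have hdeg : ∀ x, degK (fun x y => w (σ x) (σ y)) (Set.Icc 0 1) x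
        = degK w (Set.Icc 0 1) (σ x) := by
      intro x
      rw [← degK_comp hw hσ measurableSet_Icc (subset_refl _) x, hI]
    ext x
    simp only [coreIter, Set.mem_sep_iff, Set.mem_inter_iff, Set.mem_preimage, hdeg]
    exact ⟨fun ⟨hx, h⟩ => ⟨⟨hσ.2.1 hx, h⟩, hx⟩, fun ⟨⟨_, h⟩, hx⟩ => ⟨hx, h⟩⟩
  | succ n ih =>
    have hK := coreIter_measurable hw κ n
    have hKsub := coreIter_subset w κ n
    ext x
    simp only [coreIter, ih, Set.mem_sep_iff, Set.mem_inter_iff, Set.mem_preimage, Set.mem_setOf_eq,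
      degK_comp hw hσ hK hKsub]
    tauto
end

section
/- For a measure-preserving map σ and a graphon w, the shell indices satisfy δ_x(w^σ) = δ_{σ(x)}(w) for every x ∈ [0,1], and the degeneracy is invariant: δ(w^σ) = δ(w). -/
open MeasureTheory Set Filter

section aux

variable {w : ℝ → ℝ → ℝ} {σ : ℝ → ℝ}

lemma mp_measurePreserving (hσ : MPMap σ) :
    MeasurePreserving σ (volume.restrict (Set.Icc 0 1)) (volume.restrict (Set.Icc 0 1)) := by
  obtain ⟨hm, hmap, hvol⟩ := hσ
  refine ⟨hm, ?_⟩
  ext A hA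
  rw [Measure.map_apply hm hA, Measure.restrict_apply (hm hA), Measure.restrict_apply hA]
  have h1 : σ ⁻¹' (A ∩ Set.Icc 0 1) ∩ Set.Icc 0 1 = σ ⁻¹' A ∩ Set.Icc 0 1 := by
    ext x
    simp only [Set.preimage_inter, Set.mem_inter_iff, Set.mem_preimage]
    exact ⟨fun ⟨⟨h, _⟩, hx⟩ => ⟨h, hx⟩, fun ⟨h, hx⟩ => ⟨⟨h, hmap hx⟩, hx⟩⟩
  rw [← h1, hvol _ (hA.inter measurableSet_Icc) Set.inter_subset_right]

lemma change_of_var (hσ : MPMap σ)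
    {K : Set ℝ} (hK : MeasurableSet K) (hKI : K ⊆ Set.Icc 0 1)
    {g : ℝ → ℝ} (hg : Measurable g) :
    ∫ y in σ ⁻¹' K ∩ Set.Icc 0 1, g (σ y) = ∫ y in K, g y := by
  have hm : Measurable σ := hσ.1
  have hmp := mp_measurePreserving hσ
  have h1 : ∫ y in σ ⁻¹' K ∩ Set.Icc 0 1, g (σ y)
      = ∫ y in σ ⁻¹' K, g (σ y) ∂(volume.restrict (Set.Icc 0 1)) := by
    rw [Measure.restrict_restrict (hm hK)]
  rw [h1, ← integral_indicator (hm hK)]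
  have h2 : (σ ⁻¹' K).indicator (fun y => g (σ y)) = fun y => K.indicator g (σ y) := by
    ext y; by_cases h : σ y ∈ K <;> simp [Set.indicator_apply, h]
  rw [h2]
  have h3 : ∫ z, K.indicator g z ∂(Measure.map σ (volume.restrict (Set.Icc 0 1)))
      = ∫ y, K.indicator g (σ y) ∂(volume.restrict (Set.Icc 0 1)) :=
    integral_map hm.aemeasurable (hg.indicator hK).aestronglyMeasurable
  rw [hmp.map_eq] at h3
  rw [← h3, integral_indicator hK, Measure.restrict_restrict hK,
    Set.inter_eq_self_of_subset_left hKI]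

lemma degK_measurable (hw : Graphon w) {K : Set ℝ} :
    Measurable (degK w K) :=
  (hw.1.stronglyMeasurable.integral_prod_right (ν := volume.restrict K)).measurable

/-- Key structural lemma for the iterated peeling sets. -/
lemma coreIter_spec (hw : Graphon w) (hσ : MPMap σ) (κ : ℝ) (n : ℕ) :
    MeasurableSet (coreIter w κ n) ∧ coreIter w κ n ⊆ Set.Icc 0 1 ∧
      coreIter (fun x y => w (σ x) (σ y)) κ n
        = σ ⁻¹' (coreIter w κ n) ∩ Set.Icc 0 1 := by
  induction n with
  | zero =>
    refine ⟨?_, fun x hx => hx.1, ?_⟩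
    · exact measurableSet_Icc.inter (measurableSet_le measurable_const (degK_measurable hw))
    · ext x
      simp only [coreIter, Set.mem_setOf_eq, Set.mem_inter_iff, Set.mem_preimage]
      constructor
      · rintro ⟨hx, hd⟩
        refine ⟨⟨hσ.2.1 hx, ?_⟩, hx⟩
        have := change_of_var hσ measurableSet_Icc (le_refl _)
          (g := w (σ x)) hw.1.of_uncurry_left
        have hpre : σ ⁻¹' Set.Icc (0:ℝ) 1 ∩ Set.Icc 0 1 = Set.Icc 0 1 := by
          apply Set.inter_eq_self_of_subset_right
          exact fun y hy => hσ.2.1 hy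
        rw [hpre] at this
        unfold degK at hd ⊢
        rw [← this]; exact hd
      · rintro ⟨⟨_, hd⟩, hx⟩
        refine ⟨hx, ?_⟩
        have := change_of_var hσ measurableSet_Icc (le_refl _)
          (g := w (σ x)) hw.1.of_uncurry_left
        have hpre : σ ⁻¹' Set.Icc (0:ℝ) 1 ∩ Set.Icc 0 1 = Set.Icc 0 1 := by
          apply Set.inter_eq_self_of_subset_right
          exact fun y hy => hσ.2.1 hy
        rw [hpre] at this
        unfold degK at hd ⊢
        rw [this]; exact hd
  | succ n ih =>
    obtain ⟨hKm, hKI, hKeq⟩ := ih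
    refine ⟨?_, fun x hx => hKI hx.1, ?_⟩
    · exact hKm.inter (measurableSet_le measurable_const (degK_measurable hw))
    · ext x
      simp only [coreIter, Set.mem_setOf_eq, Set.mem_inter_iff, Set.mem_preimage, hKeq]
      have hdeq : ∀ x : ℝ, degK (fun x y => w (σ x) (σ y))
          (σ ⁻¹' (coreIter w κ n) ∩ Set.Icc 0 1) x = degK w (coreIter w κ n) (σ x) := by
        intro x
        exact change_of_var hσ hKm hKI (g := w (σ x)) hw.1.of_uncurry_left
      constructor
      · rintro ⟨⟨hx1, hx2⟩, hd⟩
        rw [hdeq] at hd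
        exact ⟨⟨hx1, hd⟩, hx2⟩
      · rintro ⟨⟨hx1, hd⟩, hx2⟩
        rw [← hdeq x] at hd
        exact ⟨⟨hx1, hx2⟩, hd⟩

lemma core_spec (hw : Graphon w) (hσ : MPMap σ) (κ : ℝ) :
    MeasurableSet (core w κ) ∧ core w κ ⊆ Set.Icc 0 1 ∧
      core (fun x y => w (σ x) (σ y)) κ = σ ⁻¹' (core w κ) ∩ Set.Icc 0 1 := by
  refine ⟨MeasurableSet.iInter fun n => (coreIter_spec hw hσ κ n).1,
    fun x hx => (coreIter_spec hw hσ κ 0).2.1 (Set.mem_iInter.mp hx 0), ?_⟩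
  unfold core
  rw [Set.preimage_iInter]
  ext x
  simp only [Set.mem_iInter, Set.mem_inter_iff]
  constructor
  · intro h
    have h0 := h 0
    rw [(coreIter_spec hw hσ κ 0).2.2] at h0
    refine ⟨fun n => ?_, h0.2⟩
    have hn := h n
    rw [(coreIter_spec hw hσ κ n).2.2] at hn
    exact hn.1
  · rintro ⟨h1, h2⟩ n
    rw [(coreIter_spec hw hσ κ n).2.2]
    exact ⟨h1 n, h2⟩

end aux

theorem stmt13 (w : ℝ → ℝ → ℝ) (hw : Graphon w) (σ : ℝ → ℝ) (hσ : MPMap σ) :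
    (∀ x ∈ Set.Icc (0 : ℝ) 1, shell (fun x y => w (σ x) (σ y)) x = shell w (σ x)) ∧
    degen (fun x y => w (σ x) (σ y)) = degen w := by
  constructor
  · intro x hx
    unfold shell
    congr 1
    ext κ
    simp only [Set.mem_setOf_eq]
    rw [(core_spec hw hσ κ).2.2]
    simp only [Set.mem_inter_iff, Set.mem_preimage]
    exact ⟨fun h => h.1, fun h => ⟨h, hx⟩⟩
  · unfold degen
    congr 1
    ext κ
    simp only [Set.mem_setOf_eq]
    rw [(core_spec hw hσ κ).2.2,
      hσ.2.2 _ (core_spec hw hσ κ).1 (core_spec hw hσ κ).2.1]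
end
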